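/- arXiv:math/0008072 — 9 statements merged into one kernel-verified Lean document; each statement's English description precedes it below -/
import Mathlib

section
/- In the setting below, for every λ ∈ F the N-module M(λ) is irreducible: M(λ) ≠ {0} and its only submodules are {0} and M(λ). -/
/-- For `J ∈ {⊥, ⊤}` (i.e. `J = {0}` or `J = ℕ`), `J` is closed under (truncated)
predecessor. -/
theorem predClosed (J : AddSubmonoid ℕ) (hJ : J = ⊥ ∨ J = ⊤) :
    ∀ j ∈ J, j - 1 ∈ J := by
  rcases hJ with h | h <;> subst h <;> intro j hj
  · simp only [AddSubmonoid.mem_bot] at *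
    omega
  · trivial

/-- The commutative associative multiplication `u_{α,i}·u_{β,j} = u_{α+β,i+j}` on the
`F`-vector space `A` with basis `{u_{α,i} : α ∈ F, i ∈ J}`, realized as finitely
supported functions `(F × ↥J) →₀ F`. -/
noncomputable def amul {F : Type*} [Field F] (J : AddSubmonoid ℕ)
    (u v : (F × ↥J) →₀ F) : (F × ↥J) →₀ F :=
  u.sum fun p a => v.sum fun q b => Finsupp.single (p + q) (a * b)

/-- The derivation `∂` of `A`: `∂(u_{α,j}) = α u_{α,j} + j u_{α,j−1}`. -/
noncomputable def ader {F : Type*} [Field F] (J : AddSubmonoid ℕ)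
    (hJ : J = ⊥ ∨ J = ⊤) (u : (F × ↥J) →₀ F) : (F × ↥J) →₀ F :=
  u.sum fun p a =>
    Finsupp.single p (p.1 * a)
    + Finsupp.single (p.1, ⟨(p.2 : ℕ) - 1, predClosed J hJ _ p.2.2⟩)
        (((p.2 : ℕ) : F) * a)

/-- The Novikov product `u ∘ v = u·∂(v) + ξ·u·v` on `A`. -/
noncomputable def acirc {F : Type*} [Field F] (J : AddSubmonoid ℕ)
    (hJ : J = ⊥ ∨ J = ⊤) (ξ : (F × ↥J) →₀ F) (u v : (F × ↥J) →₀ F) : (F × ↥J) →₀ F :=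
  amul J u (ader J hJ v) + amul J ξ (amul J u v)

/-- The simple Novikov algebra `N = span_F{u_{α,i} : α ∈ Δ, i ∈ J}`, as a subspace
of `A`. -/
def NSub {F : Type*} [Field F] (Δ : AddSubgroup F) (J : AddSubmonoid ℕ) :
    Submodule F ((F × ↥J) →₀ F) :=
  Finsupp.supported F F {p : F × ↥J | p.1 ∈ Δ}

/-- The `N`-module `M(λ) = span_F{u_{α+λ,i} : α ∈ Δ, i ∈ J}`, as a subspace of `A`. -/
def MSub {F : Type*} [Field F] (Δ : AddSubgroup F) (J : AddSubmonoid ℕ) (lam : F) :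
    Submodule F ((F × ↥J) →₀ F) :=
  Finsupp.supported F F {p : F × ↥J | ∃ α ∈ Δ, p.1 = α + lam}

section
variable {F : Type*} [Field F] {J : AddSubmonoid ℕ} (hJ : J = ⊥ ∨ J = ⊤)

lemma amul_single_single (p q : F × ↥J) (a b : F) :
    amul J (Finsupp.single p a) (Finsupp.single q b) = Finsupp.single (p + q) (a * b) := by
  unfold amul
  rw [Finsupp.sum_single_index, Finsupp.sum_single_index]
  · simp
  · simp [Finsupp.sum_single_index]

lemma amul_zero (u : (F × ↥J) →₀ F) : amul J u 0 = 0 := by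
  simp [amul]

lemma amul_add (u v w : (F × ↥J) →₀ F) : amul J u (v + w) = amul J u v + amul J u w := by
  unfold amul
  rw [← Finsupp.sum_add]
  apply Finsupp.sum_congr
  intro p _
  rw [Finsupp.sum_add_index'] <;> simp [mul_add]

lemma amul_comm (u v : (F × ↥J) →₀ F) : amul J u v = amul J v u := by
  unfold amul
  rw [Finsupp.sum_comm]
  apply Finsupp.sum_congr; intro p _
  apply Finsupp.sum_congr; intro q _
  rw [add_comm, mul_comm]

lemma ader_single (p : F × ↥J) (a : F) :
    ader J hJ (Finsupp.single p a) =
      Finsupp.single p (p.1 * a)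
      + Finsupp.single (p.1, ⟨(p.2 : ℕ) - 1, predClosed J hJ _ p.2.2⟩)
          (((p.2 : ℕ) : F) * a) := by
  unfold ader
  rw [Finsupp.sum_single_index]
  simp

attribute [local instance] Classical.propDecidable

lemma ader_sum_expand (x : (F × ↥J) →₀ F) (q : F × ↥J) :
    ader J hJ x q =
      (∑ p ∈ x.support, if p = q then p.1 * x p else 0)
      + ∑ p ∈ x.support,
          if ((p.1, ⟨(p.2 : ℕ) - 1, predClosed J hJ _ p.2.2⟩) : F × ↥J) = q
          then ((p.2 : ℕ) : F) * x p else 0 := by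
  classical
  unfold ader
  rw [Finsupp.sum_apply, Finsupp.sum]
  rw [← Finset.sum_add_distrib]
  apply Finset.sum_congr rfl
  intro p _
  rw [Finsupp.add_apply, Finsupp.single_apply, Finsupp.single_apply]

lemma ader_first_sum (x : (F × ↥J) →₀ F) (q : F × ↥J) :
    (∑ p ∈ x.support, if p = q then p.1 * x p else 0) = q.1 * x q := by
  classical
  rw [Finset.sum_ite_eq' x.support q (fun p => p.1 * x p)]
  by_cases h : q ∈ x.support
  · simp [h]
  · simp [h, Finsupp.notMem_support_iff.1 h]

lemma ader_apply (x : (F × ↥J) →₀ F) (q : F × ↥J)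
    (h : ∀ p : F × ↥J, p.1 = q.1 → (p.2 : ℕ) = (q.2 : ℕ) + 1 → x p = 0) :
    ader J hJ x q = q.1 * x q := by
  classical
  rw [ader_sum_expand hJ x q, ader_first_sum]
  have h2 : (∑ p ∈ x.support,
      if ((p.1, ⟨(p.2 : ℕ) - 1, predClosed J hJ _ p.2.2⟩) : F × ↥J) = q
      then ((p.2 : ℕ) : F) * x p else 0) = 0 := by
    apply Finset.sum_eq_zero
    intro p _
    split_ifs with hc
    · rw [Prod.ext_iff] at hc
      obtain ⟨h1, hs⟩ := hc
      have h2' : (p.2 : ℕ) - 1 = (q.2 : ℕ) := congrArg Subtype.val hs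
      rcases Nat.eq_zero_or_pos (p.2 : ℕ) with hz | hpos
      · rw [hz]; simp
      · have : (p.2 : ℕ) = (q.2 : ℕ) + 1 := by omega
        rw [h p h1 this, mul_zero]
    · rfl
  rw [h2, add_zero]

lemma ader_apply_full (x : (F × ↥J) →₀ F) (q : F × ↥J) (h1 : ((q.2 : ℕ) + 1) ∈ J) :
    ader J hJ x q = q.1 * x q
      + (((q.2 : ℕ) + 1 : ℕ) : F) * x (q.1, ⟨(q.2 : ℕ) + 1, h1⟩) := by
  classical
  rw [ader_sum_expand hJ x q, ader_first_sum]
  congr 1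
  set P : F × ↥J := (q.1, ⟨(q.2 : ℕ) + 1, h1⟩) with hP
  have : (∑ p ∈ x.support,
      if ((p.1, ⟨(p.2 : ℕ) - 1, predClosed J hJ _ p.2.2⟩) : F × ↥J) = q
      then ((p.2 : ℕ) : F) * x p else 0)
      = ∑ p ∈ x.support, if p = P then (((q.2 : ℕ) + 1 : ℕ) : F) * x p else 0 := by
    apply Finset.sum_congr rfl
    intro p _
    by_cases hp : p = P
    · subst hp
      have hcond : ((P.1, (⟨(P.2 : ℕ) - 1, predClosed J hJ _ P.2.2⟩ : ↥J)) : F × ↥J) = q := by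
        refine Prod.ext rfl (Subtype.ext ?_)
        simp [hP]
      rw [if_pos rfl, if_pos hcond]
    · rw [if_neg hp]
      split_ifs with hc
      · rw [Prod.ext_iff] at hc
        obtain ⟨hf, hs0⟩ := hc
        have hs : (p.2 : ℕ) - 1 = (q.2 : ℕ) := congrArg Subtype.val hs0
        have hz : (p.2 : ℕ) = 0 := by
          by_contra hzz
          apply hp
          apply Prod.ext
          · exact hf
          · apply Subtype.ext; simp [hP]; omega
        rw [hz]; simp
      · rfl
  rw [this, Finset.sum_ite_eq' x.support P]
  by_cases h : P ∈ x.support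
  · simp [h]
  · simp [h, Finsupp.notMem_support_iff.1 h]


lemma ader_add (x y : (F × ↥J) →₀ F) :
    ader J hJ (x + y) = ader J hJ x + ader J hJ y := by
  unfold ader
  rw [Finsupp.sum_add_index']
  · intro p; simp
  · intro p a b
    simp [mul_add, Finsupp.single_add]
    abel

lemma ader_smul (c : F) (x : (F × ↥J) →₀ F) :
    ader J hJ (c • x) = c • ader J hJ x := by
  unfold ader
  rw [Finsupp.sum_smul_index', Finsupp.smul_sum]
  · apply Finsupp.sum_congr
    intro p _
    have h1 : p.1 * (c * x p) = c * (p.1 * x p) := by ring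
    have h2 : ((p.2 : ℕ) : F) * (c * x p) = c * (((p.2 : ℕ) : F) * x p) := by ring
    simp only [smul_add, Finsupp.smul_single, smul_eq_mul, h1, h2]
  · intro p; simp

lemma amul_one_left (v : (F × ↥J) →₀ F) :
    amul J (Finsupp.single 0 1) v = v := by
  unfold amul
  rw [Finsupp.sum_single_index]
  · simp [Finsupp.sum_single]
  · simp

lemma amul_one_right (v : (F × ↥J) →₀ F) :
    amul J v (Finsupp.single 0 1) = v := by
  unfold amul
  have : ∀ (p : F × ↥J) (a : F),
      ((Finsupp.single (0 : F × ↥J) (1:F)).sum fun q b => Finsupp.single (p + q) (a * b))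
        = Finsupp.single p a := by
    intro p a
    rw [Finsupp.sum_single_index] <;> simp
  simp only [this]
  exact Finsupp.sum_single v


variable [CharZero F]

lemma stepA_level (V : Submodule F ((F × ↥J) →₀ F))
    (hD : ∀ x ∈ V, ader J hJ x ∈ V) (μ : F) :
    ∀ m : ℕ, ∀ hm : m ∈ J, ∀ x ∈ V,
      (∀ p : F × ↥J, x p ≠ 0 → p.1 = μ) →
      (∀ p : F × ↥J, p.1 = μ → m < (p.2 : ℕ) → x p = 0) →
      x (μ, ⟨m, hm⟩) ≠ 0 →
      Finsupp.single ((μ, (⟨0, J.zero_mem⟩ : ↥J)) : F × ↥J) (1 : F) ∈ V := by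
  intro m
  induction m with
  | zero =>
    intro hm x hxV hLev hAb hcor
    set q : F × ↥J := (μ, ⟨0, hm⟩) with hq
    set c := x q with hc
    have hx : x = Finsupp.single q c := by
      ext p
      rw [Finsupp.single_apply]
      split_ifs with h
      · rw [← h, hc]
      · by_contra hne
        have h1 : p.1 = μ := hLev p hne
        have h2 : (p.2 : ℕ) = 0 := by
          by_contra h2
          exact hne (hAb p h1 (by omega))
        exact h (by
          apply Prod.ext
          · exact h1.symm
          · exact Subtype.ext h2.symm)
    have hmem : c⁻¹ • x ∈ V := V.smul_mem _ hxV
    rw [hx, Finsupp.smul_single, smul_eq_mul, inv_mul_cancel₀ hcor] at hmem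
    exact hmem
  | succ m ih =>
    intro hm x hxV hLev hAb hcor
    have hm' : m ∈ J := by
      have := predClosed J hJ (m + 1) hm
      simpa using this
    set y := ader J hJ x - μ • x with hy
    have hyV : y ∈ V := sub_mem (hD x hxV) (V.smul_mem μ hxV)
    have key : ∀ p : F × ↥J,
        (∀ p' : F × ↥J, p'.1 = p.1 → (p'.2 : ℕ) = (p.2 : ℕ) + 1 → x p' = 0) →
        y p = (p.1 - μ) * x p := by
      intro p hp
      rw [hy, Finsupp.sub_apply, Finsupp.smul_apply, ader_apply hJ x p hp, smul_eq_mul]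
      ring
    have hLevy : ∀ p : F × ↥J, y p ≠ 0 → p.1 = μ := by
      intro p hp
      by_contra hne
      have hxlev : ∀ p' : F × ↥J, p'.1 = p.1 → x p' = 0 := by
        intro p' h1
        by_contra hxp'
        exact hne (h1 ▸ hLev p' hxp')
      apply hp
      rw [key p (fun p' h1 _ => hxlev p' h1), hxlev p rfl, mul_zero]
    have hAby : ∀ p : F × ↥J, p.1 = μ → m < (p.2 : ℕ) → y p = 0 := by
      intro p h1 h2
      have hkeyh : ∀ p' : F × ↥J, p'.1 = p.1 → (p'.2 : ℕ) = (p.2 : ℕ) + 1 → x p' = 0 := by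
        intro p' e1 e2
        exact hAb p' (e1.trans h1) (by omega)
      rw [key p hkeyh, h1, sub_self, zero_mul]
    have hcory : y ((μ, ⟨m, hm'⟩) : F × ↥J) ≠ 0 := by
      have hfull := ader_apply_full hJ x ((μ, ⟨m, hm'⟩) : F × ↥J) hm
      rw [hy, Finsupp.sub_apply, Finsupp.smul_apply, hfull, smul_eq_mul, add_sub_cancel_left]
      exact mul_ne_zero (by exact_mod_cast Nat.succ_ne_zero m) hcor
    exact ih hm' y hyV hLevy hAby hcory


lemma stepA_kill (V : Submodule F ((F × ↥J) →₀ F))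
    (hD : ∀ x ∈ V, ader J hJ x ∈ V) (q : F × ↥J) (c : F) (hc : c ≠ q.1) :
    ∀ n : ℕ, ∀ x ∈ V, x q ≠ 0 →
      (∀ p : F × ↥J, p.1 = q.1 → (q.2 : ℕ) < (p.2 : ℕ) → x p = 0) →
      (∀ p : F × ↥J, p.1 = c → n ≤ (p.2 : ℕ) → x p = 0) →
      ∃ y, y ∈ V ∧ y q ≠ 0 ∧
        (∀ p : F × ↥J, p.1 = q.1 → (q.2 : ℕ) < (p.2 : ℕ) → y p = 0) ∧
        (∀ p : F × ↥J, p.1 = c → y p = 0) ∧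
        (∀ p : F × ↥J, y p ≠ 0 → ∃ p' : F × ↥J, x p' ≠ 0 ∧ p'.1 = p.1) := by
  intro n
  induction n with
  | zero =>
    intro x hxV hxq hAb hkill
    exact ⟨x, hxV, hxq, hAb, fun p hp => hkill p hp (Nat.zero_le _),
      fun p hp => ⟨p, hp, rfl⟩⟩
  | succ n ih =>
    intro x hxV hxq hAb hkill
    set y₁ := ader J hJ x - c • x with hy₁
    have hy₁V : y₁ ∈ V := sub_mem (hD x hxV) (V.smul_mem c hxV)
    have key : ∀ p : F × ↥J,
        (∀ p' : F × ↥J, p'.1 = p.1 → (p'.2 : ℕ) = (p.2 : ℕ) + 1 → x p' = 0) →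
        y₁ p = (p.1 - c) * x p := by
      intro p hp
      rw [hy₁, Finsupp.sub_apply, Finsupp.smul_apply, ader_apply hJ x p hp, smul_eq_mul]
      ring
    have h1 : y₁ q ≠ 0 := by
      rw [key q (fun p' e1 e2 => hAb p' e1 (by omega))]
      exact mul_ne_zero (sub_ne_zero.2 (Ne.symm hc)) hxq
    have h2 : ∀ p : F × ↥J, p.1 = q.1 → (q.2 : ℕ) < (p.2 : ℕ) → y₁ p = 0 := by
      intro p e1 e2
      rw [key p (fun p' f1 f2 => hAb p' (f1.trans e1) (by omega)), hAb p e1 e2, mul_zero]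
    have h3 : ∀ p : F × ↥J, p.1 = c → n ≤ (p.2 : ℕ) → y₁ p = 0 := by
      intro p e1 e2
      rw [key p (fun p' f1 f2 => hkill p' (f1.trans e1) (by omega)), e1, sub_self, zero_mul]
    have h4 : ∀ p : F × ↥J, y₁ p ≠ 0 → ∃ p' : F × ↥J, x p' ≠ 0 ∧ p'.1 = p.1 := by
      intro p hp
      by_contra hcon
      push_neg at hcon
      have hxlev : ∀ p' : F × ↥J, p'.1 = p.1 → x p' = 0 := by
        intro p' f1
        by_contra hxp'
        exact (hcon p' hxp') f1
      apply hp
      rw [key p (fun p' f1 _ => hxlev p' f1), hxlev p rfl, mul_zero]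
    obtain ⟨y, hyV, hyq, hyAb, hykill, hylev⟩ := ih y₁ hy₁V h1 h2 h3
    refine ⟨y, hyV, hyq, hyAb, hykill, fun p hp => ?_⟩
    obtain ⟨p', hp'1, hp'2⟩ := hylev p hp
    obtain ⟨p'', hp''1, hp''2⟩ := h4 p' hp'1
    exact ⟨p'', hp''1, hp''2.trans hp'2⟩

lemma stepA_main (V : Submodule F ((F × ↥J) →₀ F))
    (hD : ∀ x ∈ V, ader J hJ x ∈ V) :
    ∀ k : ℕ, ∀ x ∈ V, x ≠ 0 → (x.support.image Prod.fst).card ≤ k →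
      ∃ μ : F, Finsupp.single ((μ, (⟨0, J.zero_mem⟩ : ↥J)) : F × ↥J) (1 : F) ∈ V := by
  intro k
  induction k with
  | zero =>
    intro x _ hx0 hcard
    obtain ⟨q₀, hq₀⟩ := Finsupp.support_nonempty_iff.2 hx0
    have : q₀.1 ∈ x.support.image Prod.fst := Finset.mem_image_of_mem _ hq₀
    have := Finset.card_pos.2 ⟨q₀.1, this⟩
    omega
  | succ k ih =>
    intro x hxV hx0 hcard
    obtain ⟨q₀, hq₀⟩ := Finsupp.support_nonempty_iff.2 hx0
    have hTne : (x.support.filter (fun p => p.1 = q₀.1)).Nonempty :=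
      ⟨q₀, Finset.mem_filter.2 ⟨hq₀, rfl⟩⟩
    obtain ⟨q, hqT, hqmax⟩ := Finset.exists_max_image _ (fun p => ((p.2 : ℕ) : ℕ)) hTne
    obtain ⟨hqsupp, hqlev⟩ := Finset.mem_filter.1 hqT
    have hxq : x q ≠ 0 := Finsupp.mem_support_iff.1 hqsupp
    have hAb : ∀ p : F × ↥J, p.1 = q.1 → (q.2 : ℕ) < (p.2 : ℕ) → x p = 0 := by
      intro p e1 e2
      by_contra hne
      have hpT : p ∈ x.support.filter (fun p => p.1 = q₀.1) :=
        Finset.mem_filter.2 ⟨Finsupp.mem_support_iff.2 hne, e1.trans hqlev⟩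
      have := hqmax p hpT
      omega
    by_cases hoff : ∃ c, c ∈ x.support.image Prod.fst ∧ c ≠ q.1
    · obtain ⟨cc, hcmem, hcne⟩ := hoff
      set n := (x.support.sup (fun p => (p.2 : ℕ))) + 1 with hn
      have hkill : ∀ p : F × ↥J, p.1 = cc → n ≤ (p.2 : ℕ) → x p = 0 := by
        intro p _ e2
        by_contra hne
        have h5 : (p.2 : ℕ) ≤ x.support.sup (fun p : F × ↥J => (p.2 : ℕ)) := by
          have := Finset.le_sup (f := fun p : F × ↥J => (p.2 : ℕ))
            (Finsupp.mem_support_iff.2 hne)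
          simpa using this
        omega
      obtain ⟨y, hyV, hyq, _, hykill, hylev⟩ :=
        stepA_kill hJ V hD q cc hcne n x hxV hxq hAb hkill
      have hy0 : y ≠ 0 := by
        intro h
        rw [h] at hyq
        exact hyq rfl
      have hsub : y.support.image Prod.fst ⊆ (x.support.image Prod.fst).erase cc := by
        intro a ha
        obtain ⟨p, hp, rfl⟩ := Finset.mem_image.1 ha
        have hyp : y p ≠ 0 := Finsupp.mem_support_iff.1 hp
        obtain ⟨p', hp'1, hp'2⟩ := hylev p hyp
        refine Finset.mem_erase.2 ⟨?_, hp'2 ▸ Finset.mem_image_of_mem _ (Finsupp.mem_support_iff.2 hp'1)⟩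
        intro h
        exact hyp (hykill p h)
      have hycard : (y.support.image Prod.fst).card ≤ k := by
        have h1 := Finset.card_le_card hsub
        have h2 := Finset.card_erase_of_mem hcmem
        omega
      exact ih y hyV hy0 hycard
    · push_neg at hoff
      have hLev : ∀ p : F × ↥J, x p ≠ 0 → p.1 = q.1 := by
        intro p hp
        exact hoff p.1 (Finset.mem_image_of_mem _ (Finsupp.mem_support_iff.2 hp))
      refine ⟨q.1, stepA_level hJ V hD q.1 (q.2 : ℕ) q.2.2 x hxV hLev hAb ?_⟩
      exact hxq

end
section StepB
variable {F : Type*} [Field F] {J : AddSubmonoid ℕ} (hJ : J = ⊥ ∨ J = ⊤)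
variable (ξ : (F × ↥J) →₀ F)

lemma W_single (α ν : F) (i j : ↥J) :
    acirc J hJ ξ (Finsupp.single ((α, i) : F × ↥J) 1) (Finsupp.single ((ν, j) : F × ↥J) 1)
      - acirc J hJ ξ (Finsupp.single ((ν, j) : F × ↥J) 1) (Finsupp.single ((α, i) : F × ↥J) 1)
    = Finsupp.single (((α, i) + (ν, j)) : F × ↥J) (ν - α)
      + Finsupp.single (((α, i) + (ν, ⟨(j : ℕ) - 1, predClosed J hJ _ j.2⟩)) : F × ↥J) ((j : ℕ) : F)
      - Finsupp.single (((ν, j) + (α, ⟨(i : ℕ) - 1, predClosed J hJ _ i.2⟩)) : F × ↥J) ((i : ℕ) : F) := by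
  have hc : amul J (Finsupp.single ((α, i) : F × ↥J) 1) (Finsupp.single ((ν, j) : F × ↥J) 1)
      = amul J (Finsupp.single ((ν, j) : F × ↥J) 1) (Finsupp.single ((α, i) : F × ↥J) 1) := by
    rw [amul_single_single, amul_single_single, add_comm]
  unfold acirc
  rw [hc]
  simp only [ader_single hJ, amul_add, amul_single_single, one_mul, mul_one]
  rw [Finsupp.single_sub]
  abel

lemma ader_mem (Δ : AddSubgroup F) (V : Submodule F ((F × ↥J) →₀ F))
    (hcl : ∀ u ∈ NSub Δ J, ∀ x ∈ V, acirc J hJ ξ u x ∈ V ∧ acirc J hJ ξ x u ∈ V) :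
    ∀ x ∈ V, ader J hJ x ∈ V := by
  intro x hx
  have he : (Finsupp.single (0 : F × ↥J) (1 : F)) ∈ NSub Δ J :=
    Finsupp.single_mem_supported F 1 (by simp [Δ.zero_mem])
  obtain ⟨h1, h2⟩ := hcl _ he x hx
  have e1 : acirc J hJ ξ (Finsupp.single 0 1) x = ader J hJ x + amul J ξ x := by
    unfold acirc; rw [amul_one_left, amul_one_left]
  have e2 : acirc J hJ ξ x (Finsupp.single 0 1) = amul J ξ x := by
    unfold acirc
    have hz : ader J hJ (Finsupp.single (0 : F × ↥J) (1 : F)) = 0 := by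
      rw [ader_single hJ]
      simp
    rw [hz, amul_zero, amul_one_right, zero_add]
  have h3 := sub_mem h1 h2
  rw [e1, e2, add_sub_cancel_right] at h3
  exact h3

end StepB

section StepB2
variable {F : Type*} [Field F] [CharZero F] {J : AddSubmonoid ℕ} (hJ : J = ⊥ ∨ J = ⊤)
variable (ξ : (F × ↥J) →₀ F) (Δ : AddSubgroup F)

lemma mem_of_single_smul (V : Submodule F ((F × ↥J) →₀ F)) (p : F × ↥J) (c : F) (hc : c ≠ 0)
    (h : Finsupp.single p c ∈ V) : Finsupp.single p (1 : F) ∈ V := by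
  have := V.smul_mem c⁻¹ h
  rwa [Finsupp.smul_single, smul_eq_mul, inv_mul_cancel₀ hc] at this

lemma hstep (V : Submodule F ((F × ↥J) →₀ F))
    (hcl : ∀ u ∈ NSub Δ J, ∀ x ∈ V, acirc J hJ ξ u x ∈ V ∧ acirc J hJ ξ x u ∈ V) :
    ∀ α ∈ Δ, ∀ ν : F, α ≠ ν →
      Finsupp.single ((ν, (⟨0, J.zero_mem⟩ : ↥J)) : F × ↥J) (1 : F) ∈ V →
      Finsupp.single ((α + ν, (⟨0, J.zero_mem⟩ : ↥J)) : F × ↥J) (1 : F) ∈ V := by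
  intro α hα ν hne hv
  have hu : Finsupp.single ((α, (⟨0, J.zero_mem⟩ : ↥J)) : F × ↥J) (1 : F) ∈ NSub Δ J :=
    Finsupp.single_mem_supported F 1 hα
  obtain ⟨h1, h2⟩ := hcl _ hu _ hv
  have hw := sub_mem h1 h2
  rw [W_single hJ ξ α ν ⟨0, J.zero_mem⟩ ⟨0, J.zero_mem⟩] at hw
  have hzz : (((⟨0, J.zero_mem⟩ : ↥J) : ℕ) : F) = 0 := by norm_num
  have hz2 : ((⟨0, J.zero_mem⟩ : ↥J) + ⟨0, J.zero_mem⟩ : ↥J) = ⟨0, J.zero_mem⟩ :=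
    Subtype.ext (zero_add 0)
  simp only [hzz, Finsupp.single_zero, add_zero, sub_zero, Prod.mk_add_mk, hz2] at hw
  exact mem_of_single_smul V _ _ (sub_ne_zero.2 (Ne.symm hne)) hw

lemma hor (lam : F) (V : Submodule F ((F × ↥J) →₀ F))
    (hcl : ∀ u ∈ NSub Δ J, ∀ x ∈ V, acirc J hJ ξ u x ∈ V ∧ acirc J hJ ξ x u ∈ V) :
    ∀ β ∈ Δ, Finsupp.single ((β + lam, (⟨0, J.zero_mem⟩ : ↥J)) : F × ↥J) (1 : F) ∈ V →
    ∀ γ ∈ Δ, Finsupp.single ((γ + lam, (⟨0, J.zero_mem⟩ : ↥J)) : F × ↥J) (1 : F) ∈ V := by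
  intro β hβ hv γ hγ
  by_cases h1 : γ = β
  · subst h1; exact hv
  · have hαΔ : γ - β ∈ Δ := sub_mem hγ hβ
    have hα0 : γ - β ≠ 0 := sub_ne_zero.2 h1
    by_cases h2 : γ - β = β + lam
    · have ht : (γ - β) + (γ - β) ∈ Δ := add_mem hαΔ hαΔ
      have htne : (γ - β) + (γ - β) ≠ β + lam := by
        rw [← h2]
        intro h
        apply hα0
        have : (γ - β) + ((γ - β) - (γ - β)) = 0 + (γ - β) - (γ-β) + (γ-β) - (γ-β) := by
          linear_combination h
        linear_combination h
      have hs1 := hstep hJ ξ Δ V hcl _ ht (β + lam) htne hv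
      have htne2 : -(γ - β) ≠ ((γ - β) + (γ - β)) + (β + lam) := by
        rw [← h2]
        intro h
        have h4 : (4 : F) * (γ - β) = 0 := by linear_combination -h
        rcases mul_eq_zero.1 h4 with h5 | h5
        · norm_num at h5
        · exact hα0 h5
      have hs2 := hstep hJ ξ Δ V hcl _ (neg_mem hαΔ) _ htne2 hs1
      have hpt : -(γ - β) + ((γ - β) + (γ - β) + (β + lam)) = γ + lam := by ring
      rwa [hpt] at hs2
    · have hs := hstep hJ ξ Δ V hcl _ hαΔ (β + lam) h2 hv
      have hpt : (γ - β) + (β + lam) = γ + lam := by ring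
      rwa [hpt] at hs

end StepB2

section StepB3
variable {F : Type*} [Field F] [CharZero F]

lemma ver {J : AddSubmonoid ℕ} (hJ : J = ⊥ ∨ J = ⊤) (ξ : (F × ↥J) →₀ F) (Δ : AddSubgroup F)
    (V : Submodule F ((F × ↥J) →₀ F))
    (hcl : ∀ u ∈ NSub Δ J, ∀ x ∈ V, acirc J hJ ξ u x ∈ V ∧ acirc J hJ ξ x u ∈ V) :
    ∀ ν : F, Finsupp.single ((ν, (⟨0, J.zero_mem⟩ : ↥J)) : F × ↥J) (1 : F) ∈ V →
    ∀ jn : ℕ, ∀ hj : jn ∈ J,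
      Finsupp.single ((ν, (⟨jn, hj⟩ : ↥J)) : F × ↥J) (1 : F) ∈ V := by
  intro ν hv jn hj
  rcases hJ with hbot | htop
  · have hj0 : jn = 0 := by
      subst hbot
      simpa using hj
    subst hj0
    exact hv
  · subst htop
    by_cases hν : ν = 0
    · subst hν
      have hu : Finsupp.single (((0:F), (⟨jn + 1, trivial⟩ : ↥(⊤ : AddSubmonoid ℕ)))) (1 : F)
          ∈ NSub Δ ⊤ := Finsupp.single_mem_supported F 1 Δ.zero_mem
      obtain ⟨h1, h2⟩ := hcl _ hu _ hv
      have hw := sub_mem h1 h2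
      rw [W_single (Or.inr rfl) ξ 0 0 ⟨jn + 1, trivial⟩ ⟨0, AddSubmonoid.zero_mem _⟩] at hw
      simp only [Prod.mk_add_mk, zero_add, add_zero, sub_self, Finsupp.single_zero, zero_sub,
        Nat.cast_zero] at hw
      have e2 : ((⟨0, AddSubmonoid.zero_mem _⟩
          + ⟨jn + 1 - 1, predClosed ⊤ (Or.inr rfl) (jn + 1) trivial⟩ :
          ↥(⊤ : AddSubmonoid ℕ))) = (⟨jn, hj⟩ : ↥(⊤ : AddSubmonoid ℕ)) :=
        Subtype.ext (by push_cast; omega)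
      rw [e2] at hw
      have hw2 := neg_mem hw
      rw [neg_neg] at hw2
      refine mem_of_single_smul V _ _ ?_ hw2
      exact Nat.cast_ne_zero.2 (by omega)
    · have main : ∀ n : ℕ,
          Finsupp.single ((ν, (⟨n, trivial⟩ : ↥(⊤ : AddSubmonoid ℕ))) : F × _) (1 : F) ∈ V := by
        intro n
        induction n with
        | zero => exact hv
        | succ n ihn =>
          have hu : Finsupp.single (((0:F), (⟨1, trivial⟩ : ↥(⊤ : AddSubmonoid ℕ)))) (1 : F)
              ∈ NSub Δ ⊤ := Finsupp.single_mem_supported F 1 Δ.zero_mem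
          obtain ⟨h1, h2⟩ := hcl _ hu _ ihn
          have hw := sub_mem h1 h2
          rw [W_single (Or.inr rfl) ξ 0 ν ⟨1, trivial⟩ ⟨n, trivial⟩] at hw
          simp only [Prod.mk_add_mk, zero_add, add_zero, sub_zero, Nat.cast_one] at hw
          have e2 : ((⟨1, trivial⟩ + ⟨n, trivial⟩ : ↥(⊤ : AddSubmonoid ℕ)))
              = (⟨n + 1, trivial⟩ : ↥(⊤ : AddSubmonoid ℕ)) :=
            Subtype.ext (by push_cast; omega)
          have e3 : ((⟨n, trivial⟩ + ⟨1 - 1, predClosed ⊤ (Or.inr rfl) 1 trivial⟩ :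
              ↥(⊤ : AddSubmonoid ℕ))) = (⟨n, trivial⟩ : ↥(⊤ : AddSubmonoid ℕ)) :=
            Subtype.ext (by push_cast; omega)
          have hmid : Finsupp.single ((ν, (⟨1, trivial⟩
                + ⟨n - 1, predClosed ⊤ (Or.inr rfl) n trivial⟩ :
                ↥(⊤ : AddSubmonoid ℕ))) : F × _) ((n : ℕ) : F)
              = (n : F) • Finsupp.single ((ν, (⟨n, trivial⟩ :
                  ↥(⊤ : AddSubmonoid ℕ))) : F × _) (1 : F) := by
            cases n with
            | zero => simp
            | succ m =>
              have e4 : ((⟨1, trivial⟩ + ⟨m + 1 - 1, predClosed ⊤ (Or.inr rfl) (m+1) trivial⟩ :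
                  ↥(⊤ : AddSubmonoid ℕ))) = (⟨m + 1, trivial⟩ : ↥(⊤ : AddSubmonoid ℕ)) :=
                Subtype.ext (by push_cast; omega)
              rw [e4, Finsupp.smul_single]
              norm_num
          rw [e2, e3, hmid] at hw
          have ha := add_mem (sub_mem hw (V.smul_mem ((n : ℕ) : F) ihn)) ihn
          have heq : (Finsupp.single ((ν, (⟨n + 1, trivial⟩ : ↥(⊤ : AddSubmonoid ℕ))) : F × _) ν
                + (n : F) • Finsupp.single ((ν, (⟨n, trivial⟩ : ↥(⊤ : AddSubmonoid ℕ))) : F × _)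
                    (1 : F)
                - Finsupp.single ((ν, (⟨n, trivial⟩ : ↥(⊤ : AddSubmonoid ℕ))) : F × _) (1 : F))
                - (n : F) • Finsupp.single ((ν, (⟨n, trivial⟩ : ↥(⊤ : AddSubmonoid ℕ))) : F × _)
                    (1 : F)
                + Finsupp.single ((ν, (⟨n, trivial⟩ : ↥(⊤ : AddSubmonoid ℕ))) : F × _) (1 : F)
              = Finsupp.single ((ν, (⟨n + 1, trivial⟩ : ↥(⊤ : AddSubmonoid ℕ))) : F × _) ν := by
            abel
          rw [heq] at ha
          exact mem_of_single_smul V _ _ hν ha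
      exact main jn
end StepB3

/-- In the setting of the paper (`F` of characteristic 0, `J ∈ {{0}, ℕ}`,
`Δ ≤ F` an additive subgroup with `Δ ≠ {0}` or `J = ℕ`, `ξ ∈ N`), for every `λ ∈ F`
the `N`-module `M(λ)` is irreducible: `M(λ) ≠ {0}` and its only submodules are `{0}`
and `M(λ)`. -/
theorem M_lambda_irreducible
    {F : Type*} [Field F] [CharZero F]
    (Δ : AddSubgroup F) (J : AddSubmonoid ℕ) (hJ : J = ⊥ ∨ J = ⊤)
    (hne : Δ ≠ ⊥ ∨ J = ⊤)
    (ξ : (F × ↥J) →₀ F) (hξ : ξ ∈ NSub Δ J) (lam : F) :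
    MSub Δ J lam ≠ ⊥ ∧
    ∀ V : Submodule F ((F × ↥J) →₀ F), V ≤ MSub Δ J lam →
      (∀ u ∈ NSub Δ J, ∀ x ∈ V, acirc J hJ ξ u x ∈ V ∧ acirc J hJ ξ x u ∈ V) →
      V = ⊥ ∨ V = MSub Δ J lam := by
  classical
  constructor
  · intro hbot
    have hmem : Finsupp.single ((lam, (⟨0, J.zero_mem⟩ : ↥J)) : F × ↥J) (1 : F)
        ∈ MSub Δ J lam :=
      Finsupp.single_mem_supported F 1 ⟨0, Δ.zero_mem, (zero_add lam).symm⟩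
    rw [hbot] at hmem
    exact one_ne_zero (Finsupp.single_eq_zero.1 ((Submodule.mem_bot F).1 hmem))
  · intro V hVM hcl
    by_cases hV : V = ⊥
    · exact Or.inl hV
    right
    have hD : ∀ x ∈ V, ader J hJ x ∈ V := ader_mem hJ ξ Δ V hcl
    obtain ⟨x, hxV, hx0⟩ := (Submodule.ne_bot_iff V).1 hV
    obtain ⟨μ, hμ⟩ := stepA_main hJ V hD (x.support.image Prod.fst).card x hxV hx0 le_rfl
    have hMv : Finsupp.single ((μ, (⟨0, J.zero_mem⟩ : ↥J)) : F × ↥J) (1 : F)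
        ∈ MSub Δ J lam := hVM hμ
    have hsupp := Finsupp.mem_supported F _ |>.1 hMv
    have hpt : ((μ, (⟨0, J.zero_mem⟩ : ↥J)) : F × ↥J)
        ∈ {p : F × ↥J | ∃ α ∈ Δ, p.1 = α + lam} := by
      apply hsupp
      rw [Finsupp.support_single_ne_zero _ one_ne_zero]
      simp
    obtain ⟨β, hβ, hμβ⟩ := hpt
    rw [show (((μ, (⟨0, J.zero_mem⟩ : ↥J)) : F × ↥J)).1 = μ from rfl] at hμβ
    rw [hμβ] at hμ
    apply le_antisymm hVM
    rw [MSub, Finsupp.supported_eq_span_single]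
    rw [Submodule.span_le]
    rintro _ ⟨p, hp, rfl⟩
    obtain ⟨γ, hγ, hp1⟩ := hp
    have hlev := hor hJ ξ Δ lam V hcl β hβ hμ γ hγ
    have hvert := ver hJ ξ Δ V hcl (γ + lam) hlev (p.2 : ℕ) p.2.2
    have hpe : ((γ + lam, (⟨(p.2 : ℕ), p.2.2⟩ : ↥J)) : F × ↥J) = p :=
      Prod.ext hp1.symm (Subtype.ext rfl)
    rw [hpe] at hvert
    exact hvert
end

section
/- Let G be a free abelian group (a free ℤ-module, written additively), F₁ a field, and f : G×G → F₁ˣ a symmetric two-cycle. Then f is a two-boundary: there exists a map η : G → F₁ˣ such that f(g,h) = η(g+h)η(g)⁻¹η(h)⁻¹ for all g,h ∈ G. -/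
/-- Auxiliary extension type for the proof below: pairs `(u, g)` with a twisted addition. -/
structure MyTwistedExt (F₁ : Type*) [Field F₁] (G : Type*) where
  u : F₁ˣ
  g : G

/-- Let `G` be a free abelian group (a free `ℤ`-module), `F₁` a field, and
`f : G×G → F₁ˣ` a symmetric two-cycle.  Then `f` is a two-boundary: there is a map
`η : G → F₁ˣ` with `f(g,h) = η(g+h)η(g)⁻¹η(h)⁻¹` for all `g,h`. -/
theorem symmetric_twoCycle_free_abelian_is_twoBoundary
    {G : Type*} [AddCommGroup G] [Module.Free ℤ G]
    {F₁ : Type*} [Field F₁]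
    (f : G → G → F₁ˣ)
    (hcocycle : ∀ g₁ g₂ g₃ : G, f g₁ g₂ * f (g₁ + g₂) g₃ = f g₁ (g₂ + g₃) * f g₂ g₃)
    (hsymm : ∀ g₁ g₂ : G, f g₁ g₂ = f g₂ g₁) :
    ∃ η : G → F₁ˣ, ∀ g h : G, f g h = η (g + h) * (η g)⁻¹ * (η h)⁻¹ := by
  classical
  have hright : ∀ g : G, f g 0 = f 0 0 := by
    intro g
    have h := hcocycle g 0 0
    simp only [add_zero, zero_add] at h
    exact mul_left_cancel h
  have hleft : ∀ g : G, f 0 g = f 0 0 := fun g => (hsymm 0 g).trans (hright g)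
  letI : Zero (MyTwistedExt F₁ G) := ⟨⟨(f 0 0)⁻¹, 0⟩⟩
  letI : Add (MyTwistedExt F₁ G) := ⟨fun a b => ⟨a.u * b.u * f a.g b.g, a.g + b.g⟩⟩
  letI : Neg (MyTwistedExt F₁ G) :=
    ⟨fun a => ⟨a.u⁻¹ * (f 0 0)⁻¹ * (f a.g (-a.g))⁻¹, -a.g⟩⟩
  letI : AddCommGroup (MyTwistedExt F₁ G) :=
    { add := (· + ·)
      zero := 0
      neg := Neg.neg
      nsmul := nsmulRec
      zsmul := zsmulRec
      add_assoc := by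
        rintro ⟨a, x⟩ ⟨b, y⟩ ⟨c, z⟩
        show (⟨a * b * f x y * c * f (x + y) z, x + y + z⟩ : MyTwistedExt F₁ G) =
          ⟨a * (b * c * f y z) * f x (y + z), x + (y + z)⟩
        have h := hcocycle x y z
        have h' : ((f x y : F₁ˣ) : F₁) * (f (x + y) z : F₁ˣ) =
            ((f x (y + z) : F₁ˣ) : F₁) * (f y z : F₁ˣ) := by
          exact_mod_cast congrArg Units.val h
        simp only [MyTwistedExt.mk.injEq]
        refine ⟨?_, add_assoc x y z⟩
        ext
        push_cast
        linear_combination ((a : F₁) * b * c) * h'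
      zero_add := by
        rintro ⟨a, x⟩
        show (⟨(f 0 0)⁻¹ * a * f 0 x, 0 + x⟩ : MyTwistedExt F₁ G) = ⟨a, x⟩
        simp only [MyTwistedExt.mk.injEq]
        refine ⟨?_, zero_add x⟩
        rw [hleft x, mul_comm]
        exact mul_inv_cancel_left _ a
      add_zero := by
        rintro ⟨a, x⟩
        show (⟨a * (f 0 0)⁻¹ * f x 0, x + 0⟩ : MyTwistedExt F₁ G) = ⟨a, x⟩
        simp only [MyTwistedExt.mk.injEq]
        refine ⟨?_, add_zero x⟩
        rw [hright x]
        exact inv_mul_cancel_right a _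
      neg_add_cancel := by
        rintro ⟨a, x⟩
        show (⟨a⁻¹ * (f 0 0)⁻¹ * (f x (-x))⁻¹ * a * f (-x) x, -x + x⟩ : MyTwistedExt F₁ G) =
          ⟨(f 0 0)⁻¹, 0⟩
        simp only [MyTwistedExt.mk.injEq]
        refine ⟨?_, neg_add_cancel x⟩
        rw [hsymm (-x) x]
        ext
        push_cast
        field_simp
      add_comm := by
        rintro ⟨a, x⟩ ⟨b, y⟩
        show (⟨a * b * f x y, x + y⟩ : MyTwistedExt F₁ G) = ⟨b * a * f y x, y + x⟩
        simp only [MyTwistedExt.mk.injEq]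
        exact ⟨by rw [hsymm x y, mul_comm a b], add_comm x y⟩ }
  -- projection to G as a ℤ-linear map
  let π : MyTwistedExt F₁ G →ₗ[ℤ] G :=
    AddMonoidHom.toIntLinearMap
      { toFun := fun a => a.g
        map_zero' := rfl
        map_add' := fun a b => rfl }
  have hπ : Function.Surjective π := fun g => ⟨⟨1, g⟩, rfl⟩
  obtain ⟨s, hs⟩ := Module.projective_lifting_property π LinearMap.id hπ
  have hsg : ∀ g : G, (s g).g = g := fun g => LinearMap.congr_fun hs g
  refine ⟨fun g => (s g).u, fun g h => ?_⟩
  show f g h = (s (g + h)).u * ((s g).u)⁻¹ * ((s h).u)⁻¹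
  have hadd : s (g + h) = s g + s h := map_add s g h
  have h1 : (s (g + h)).u = (s g).u * (s h).u * f (s g).g (s h).g :=
    congrArg MyTwistedExt.u hadd
  rw [hsg g, hsg h] at h1
  rw [h1]
  ext
  push_cast
  field_simp
end

section
/- Let G be a torsion-free abelian group (written additively) and F₁ a field in which for every positive integer n and every λ ∈ F₁ the equation x^n = λ has a solution in F₁. Then every symmetric two-cycle f : G×G → F₁ˣ is a two-boundary: there exists η : G → F₁ˣ with f(g,h) = η(g+h)η(g)⁻¹η(h)⁻¹ for all g,h ∈ G. -/
/-!
If `f` is a symmetric 2-cocycle on `G` with values in an abelian group `A`, then the twisted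
product `G × A` with `(g, a) + (h, b) = (g + h, a + b + f g h)` is an abelian group containing
`A`. When `A` is divisible it is an injective `ℤ`-module, so this inclusion has a retraction `r`,
and `η g = -r (g, 0)` satisfies `f = d η`. The units of a field with all `n`-th roots form a
divisible group.
-/

open Function

section

variable {G A : Type*} [AddCommGroup G] [AddCommGroup A]

def IsTwoCocycle (f : G → G → A) : Prop :=
  ∀ g₁ g₂ g₃, f g₁ g₂ + f (g₁ + g₂) g₃ = f g₁ (g₂ + g₃) + f g₂ g₃

namespace IsTwoCocycle

variable {f : G → G → A}

theorem apply_zero_left (hf : IsTwoCocycle f) (g : G) : f 0 g = f 0 0 := by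
  simpa using (hf 0 0 g).symm

theorem apply_zero_right (hf : IsTwoCocycle f) (g : G) : f g 0 = f 0 0 := by
  simpa using hf g 0 0

end IsTwoCocycle

@[ext]
structure TwistedProd (f : G → G → A) where
  base : G
  fiber : A

namespace TwistedProd

variable (f : G → G → A)

instance : Add (TwistedProd f) :=
  ⟨fun x y => ⟨x.base + y.base, x.fiber + y.fiber + f x.base y.base⟩⟩

-- The identity is `⟨0, -f 0 0⟩` because a 2-cocycle satisfies `f 0 g = f 0 0`.
instance : Zero (TwistedProd f) := ⟨⟨0, -f 0 0⟩⟩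

instance : Neg (TwistedProd f) := ⟨fun x => ⟨-x.base, -x.fiber - f (-x.base) x.base - f 0 0⟩⟩

theorem mk_add_mk (g h : G) (a b : A) :
    (⟨g, a⟩ + ⟨h, b⟩ : TwistedProd f) = ⟨g + h, a + b + f g h⟩ := rfl

theorem zero_def : (0 : TwistedProd f) = ⟨0, -f 0 0⟩ := rfl

theorem neg_mk (g : G) (a : A) :
    -(⟨g, a⟩ : TwistedProd f) = ⟨-g, -a - f (-g) g - f 0 0⟩ := rfl

variable [hf : Fact (IsTwoCocycle f)]

instance : AddGroup (TwistedProd f) :=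
  AddGroup.ofLeftAxioms
    (fun ⟨g, a⟩ ⟨h, b⟩ ⟨k, c⟩ => by
      simp only [mk_add_mk, add_assoc, mk.injEq, true_and]
      calc _ = a + b + c + (f g h + f (g + h) k) := by abel
        _ = _ := by rw [hf.out g h k]; abel)
    (fun ⟨g, a⟩ => by
      simp only [zero_def, mk_add_mk, hf.out.apply_zero_left, zero_add, mk.injEq, true_and]
      abel)
    (fun ⟨g, a⟩ => by
      simp only [neg_mk, mk_add_mk, zero_def, neg_add_cancel, mk.injEq, true_and]
      abel)

instance [hs : Fact (∀ g h, f g h = f h g)] : AddCommGroup (TwistedProd f) where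
  add_comm := fun ⟨g, a⟩ ⟨h, b⟩ => by
    simp only [mk_add_mk, hs.out g h, add_comm g h, add_comm a b]

def inl : A →+ TwistedProd f where
  toFun a := ⟨0, a - f 0 0⟩
  map_zero' := by simp [zero_def]
  map_add' a b := by
    simp only [mk_add_mk, add_zero, mk.injEq, true_and]
    abel

theorem inl_injective : Injective (inl f) := fun a b hab => by
  simpa [inl] using congrArg fiber hab

theorem mk_zero_add_mk_zero (g h : G) :
    (⟨g, 0⟩ + ⟨h, 0⟩ : TwistedProd f) = ⟨g + h, 0⟩ + inl f (f g h) := by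
  simp [inl, mk_add_mk, hf.out.apply_zero_right]

end TwistedProd

theorem IsTwoCocycle.exists_eq_coboundary_of_divisibleBy [DivisibleBy A ℤ] {f : G → G → A}
    (hf : IsTwoCocycle f) (hs : ∀ g h, f g h = f h g) :
    ∃ η : G → A, ∀ g h, f g h = η (g + h) - η g - η h := by
  have := Fact.mk hf
  have := Fact.mk hs
  obtain ⟨r, hr⟩ := (Module.Baer.of_divisible A).extension_property_addMonoidHom
    (TwistedProd.inl f) (TwistedProd.inl_injective f) (AddMonoidHom.id A)
  refine ⟨fun g => -r ⟨g, 0⟩, fun g h => ?_⟩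
  dsimp only
  have hgh := congrArg r (TwistedProd.mk_zero_add_mk_zero f g h)
  rw [map_add, map_add, ← AddMonoidHom.comp_apply, hr, AddMonoidHom.id_apply] at hgh
  rw [eq_sub_of_add_eq' hgh.symm]
  abel

end

theorem Units.pow_surjective_of_surjective_pow {M : Type*} [Monoid M] {n : ℕ} (hn : n ≠ 0)
    (h : Surjective fun x : M => x ^ n) : Surjective fun u : Mˣ => u ^ n := fun u =>
  let ⟨x, hx⟩ := h u
  ⟨u.ofPow x hn hx, Units.ext (by rw [Units.val_pow_eq_pow_val]; exact hx)⟩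

theorem symmetric_twoCycle_torsionFree_perfect_is_twoBoundary_general
    {G : Type*} [AddCommGroup G]
    {F₁ : Type*} [Field F₁]
    (hroots : ∀ (n : ℕ), 0 < n → ∀ lam : F₁, ∃ x : F₁, x ^ n = lam)
    (f : G → G → F₁ˣ)
    (hcocycle : ∀ g₁ g₂ g₃ : G, f g₁ g₂ * f (g₁ + g₂) g₃ = f g₁ (g₂ + g₃) * f g₂ g₃)
    (hsymm : ∀ g₁ g₂ : G, f g₁ g₂ = f g₂ g₁) :
    ∃ η : G → F₁ˣ, ∀ g h : G, f g h = η (g + h) * (η g)⁻¹ * (η h)⁻¹ := by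
  let : DivisibleBy (Additive F₁ˣ) ℕ := divisibleByOfSMulRightSurj _ _ fun hn =>
    Units.pow_surjective_of_surjective_pow hn (hroots _ (Nat.pos_of_ne_zero hn))
  let := AddGroup.divisibleByIntOfDivisibleByNat (Additive F₁ˣ)
  obtain ⟨η, hη⟩ := IsTwoCocycle.exists_eq_coboundary_of_divisibleBy
    (f := fun g h => Additive.ofMul (f g h))
    (fun g₁ g₂ g₃ => congrArg Additive.ofMul (hcocycle g₁ g₂ g₃))
    (fun g h => congrArg Additive.ofMul (hsymm g h))
  refine ⟨fun g => (η g).toMul, fun g h => ?_⟩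
  simpa [div_eq_mul_inv] using congrArg Additive.toMul (hη g h)

/-- Let `G` be a torsion-free abelian group and `F₁` a field in which every
`x^n = λ` (`n > 0`) has a solution.  Then every symmetric two-cycle `f : G×G → F₁ˣ` is a
two-boundary. -/
theorem symmetric_twoCycle_torsionFree_perfect_is_twoBoundary
    {G : Type*} [AddCommGroup G]
    (htf : ∀ g : G, ∀ n : ℕ, 0 < n → n • g = 0 → g = 0)
    {F₁ : Type*} [Field F₁]
    (hroots : ∀ (n : ℕ), 0 < n → ∀ lam : F₁, ∃ x : F₁, x ^ n = lam)
    (f : G → G → F₁ˣ)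
    (hcocycle : ∀ g₁ g₂ g₃ : G, f g₁ g₂ * f (g₁ + g₂) g₃ = f g₁ (g₂ + g₃) * f g₂ g₃)
    (hsymm : ∀ g₁ g₂ : G, f g₁ g₂ = f g₂ g₁) :
    ∃ η : G → F₁ˣ, ∀ g h : G, f g h = η (g + h) * (η g)⁻¹ * (η h)⁻¹ :=
  symmetric_twoCycle_torsionFree_perfect_is_twoBoundary_general hroots f hcocycle hsymm
end

section
/- Let (N,∘) be a Novikov algebra over a field F of characteristic 0, let u ∈ N and λ ∈ F, and set N_{u,λ} = {v ∈ N : (R_u − λ·Id)^m(v) = 0 for some m ∈ ℕ}. Then N_{u,λ} is an ideal of N, i.e. N∘N_{u,λ} ⊆ N_{u,λ} and N_{u,λ}∘N ⊆ N_{u,λ}. -/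
/-- Let `(N,∘)` be a Novikov algebra over a field `F` of characteristic 0,
`u ∈ N`, `λ ∈ F`, and `N_{u,λ} = {v : (R_u − λ·Id)^m v = 0 for some m}`.  Then `N_{u,λ}`
is an ideal of `N` (Zel'manov). -/
theorem novikov_genEigenspace_of_right_mul_is_ideal
    {F : Type*} [Field F] [CharZero F]
    {N : Type*} [AddCommGroup N] [Module F N]
    (mul : N →ₗ[F] N →ₗ[F] N)
    (hNov1 : ∀ u v w : N, mul (mul u v) w = mul (mul u w) v)
    (hNov2 : ∀ u v w : N,
      mul (mul u v) w - mul u (mul v w) = mul (mul v u) w - mul v (mul u w))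
    (u : N) (lam : F) :
    ∀ v : N, (∃ m : ℕ, ((mul.flip u - lam • (1 : Module.End F N)) ^ m) v = 0) →
      ∀ w : N,
        (∃ m : ℕ, ((mul.flip u - lam • (1 : Module.End F N)) ^ m) (mul w v) = 0) ∧
        (∃ m : ℕ, ((mul.flip u - lam • (1 : Module.End F N)) ^ m) (mul v w) = 0) := by
  set T : Module.End F N := mul.flip u - lam • (1 : Module.End F N) with hTdef
  have hT : ∀ x : N, T x = mul x u - lam • x := by
    intro x
    simp [hTdef, LinearMap.sub_apply, LinearMap.smul_apply]
  -- T commutes with right multiplications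
  have hA : ∀ x y : N, T (mul y x) = mul (T y) x := by
    intro x y
    simp [hT, map_sub, map_smul, LinearMap.sub_apply, LinearMap.smul_apply, hNov1 y x u]
  have key : ∀ v w : N,
      mul (mul w v) u = mul w (mul v u) + mul (mul v u) w - mul v (mul w u) := by
    intro v w
    have h2 := hNov2 w v u
    rw [hNov1 v w u] at h2
    rw [add_sub_assoc, ← h2]
    abel
  have hB : ∀ v w : N, T (mul w v) = mul w (T v) + mul (T v) w - mul v (T w) := by
    intro v w
    simp only [hT, map_sub, map_smul, LinearMap.sub_apply, LinearMap.smul_apply,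
      key v w]
    abel
  have hRn : ∀ (n : ℕ) (x y : N), (T ^ n) (mul y x) = mul ((T ^ n) y) x := by
    intro n
    induction n with
    | zero => intro x y; simp
    | succ n ih =>
      intro x y
      rw [pow_succ', Module.End.mul_apply, Module.End.mul_apply, ih, hA]
  have hInd : ∀ (n : ℕ) (v w : N),
      (T ^ (n + 1)) (mul w v) = mul w ((T ^ (n + 1)) v)
        + (n + 1) • mul ((T ^ (n + 1)) v) w - (n + 1) • mul ((T ^ n) v) (T w) := by
    intro n
    induction n with
    | zero => intro v w; simpa using hB v w
    | succ n ih =>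
      intro v w
      have hstep : (T ^ (n + 2)) (mul w v) = T ((T ^ (n + 1)) (mul w v)) := by
        rw [pow_succ', Module.End.mul_apply]
      have hv : (T ^ (n + 2)) v = T ((T ^ (n + 1)) v) := by
        rw [pow_succ', Module.End.mul_apply]
      have hv' : (T ^ (n + 1)) v = T ((T ^ n) v) := by
        rw [pow_succ', Module.End.mul_apply]
      rw [hstep, ih v w, map_sub, map_add, map_nsmul, map_nsmul, hB ((T ^ (n + 1)) v) w,
        hA w ((T ^ (n + 1)) v), hA (T w) ((T ^ n) v), hv, ← hv']
      rw [succ_nsmul ((mul (T ((T ^ (n + 1)) v))) w) (n + 1),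
        succ_nsmul ((mul ((T ^ (n + 1)) v)) (T w)) (n + 1)]
      abel
  intro v hv w
  obtain ⟨m, hm⟩ := hv
  have hm1 : (T ^ (m + 1)) v = 0 := by
    rw [pow_succ', Module.End.mul_apply, hm, map_zero]
  constructor
  · refine ⟨m + 1, ?_⟩
    rw [hInd m v w, hm1, hm]
    simp
  · refine ⟨m, ?_⟩
    rw [hRn m w v, hm]
    simp
end

section
/- Let (N,∘) be a Novikov algebra over a field F of characteristic 0, let M be a module over N, and suppose e ∈ N satisfies e∘e = λe for some λ ∈ F. Then (R_M(e) − λ·Id_M)² ∘ R_M(e) = 0 as an operator on M; equivalently, ((w∘e)∘e)∘e − 2λ(w∘e)∘e + λ²(w∘e) = 0 for every w ∈ M. -/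
/-- A module over a Novikov algebra `(N, mul)`: a vector space `M` with bilinear left and
right actions such that both Novikov identities hold whenever exactly one of the three
arguments lies in `M`. -/
structure NovikovModule {F : Type*} [Field F] {N : Type*} [AddCommGroup N] [Module F N]
    (mul : N →ₗ[F] N →ₗ[F] N) (M : Type*) [AddCommGroup M] [Module F M] where
  l : N →ₗ[F] M →ₗ[F] M
  r : M →ₗ[F] N →ₗ[F] M
  id1_fst : ∀ (x : M) (y z : N), r (r x y) z = r (r x z) y
  id1_snd : ∀ (x : N) (y : M) (z : N), r (l x y) z = l (mul x z) y
  id1_trd : ∀ (x y : N) (z : M), l (mul x y) z = r (l x z) y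
  id2_fst : ∀ (x : M) (y z : N),
    r (r x y) z - r x (mul y z) = r (l y x) z - l y (r x z)
  id2_snd : ∀ (x : N) (y : M) (z : N),
    r (l x y) z - l x (r y z) = r (r y x) z - r y (mul x z)
  id2_trd : ∀ (x y : N) (z : M),
    l (mul x y) z - l x (l y z) = l (mul y x) z - l y (l x z)

/-- If `M` is a module over a Novikov algebra `(N,∘)` over a field of
characteristic 0 and `e ∈ N` satisfies `e∘e = λ·e`, then
`(R_M(e) − λ·Id)² ∘ R_M(e) = 0`, i.e.
`((w∘e)∘e)∘e − 2λ(w∘e)∘e + λ²(w∘e) = 0` for every `w ∈ M`. -/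
theorem novikov_module_RMe_identity
    {F : Type*} [Field F] [CharZero F]
    {N : Type*} [AddCommGroup N] [Module F N]
    {M : Type*} [AddCommGroup M] [Module F M]
    (mul : N →ₗ[F] N →ₗ[F] N)
    (hNov1 : ∀ u v w : N, mul (mul u v) w = mul (mul u w) v)
    (hNov2 : ∀ u v w : N,
      mul (mul u v) w - mul u (mul v w) = mul (mul v u) w - mul v (mul u w))
    (mod : NovikovModule mul M)
    (e : N) (lam : F) (he : mul e e = lam • e) :
    ∀ w : M,
      mod.r (mod.r (mod.r w e) e) e - (2 * lam) • mod.r (mod.r w e) e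
        + (lam ^ 2) • mod.r w e = 0 := by

  have hBe : ∀ x : M, mod.r (mod.l e x) e = lam • mod.l e x := by
    intro x
    have h := mod.id1_trd e e x
    rw [he] at h
    rw [← h]
    simp
  have hstar : ∀ x : M, mod.r (mod.r x e) e
      = lam • mod.r x e + lam • mod.l e x - mod.l e (mod.r x e) := by
    intro x
    have h2 := mod.id2_fst x e e
    rw [he, hBe] at h2
    have hx : mod.r x (lam • e) = lam • mod.r x e := by simp
    rw [hx] at h2
    have := eq_add_of_sub_eq h2
    rw [this]; abel
  intro w
  have h1 := hstar w
  have h2 : mod.r (mod.r (mod.r w e) e) e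
      = lam • mod.r (mod.r w e) e + lam • mod.r (mod.l e w) e
        - mod.r (mod.l e (mod.r w e)) e := by
    rw [h1]; simp [map_add, map_sub, map_smul]; rw [h1]
  rw [h2, hBe, hBe, h1]
  module
end

section
/- Let (N,∘) be a Novikov algebra over a field F of characteristic 0 and M an irreducible N-module such that R_M([N,N]⁻) ≠ {0}, i.e. there exist u,v ∈ N and w ∈ M with w∘(u∘v − v∘u) ≠ 0. Let n ∈ ℕ and u₁,…,u_n ∈ N, and let φ and ψ be the unital F-algebra homomorphisms from the free associative F-algebra F⟨x₁,…,x_n⟩ to End_F(N) and End_F(M) sending x_i to R_{u_i} and to R_M(u_i), respectively. Then for every T ∈ F⟨x₁,…,x_n⟩, φ(T) = 0 implies ψ(T) = 0. -/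
/-- Osborn's Lemma 4.1: Let `M` be an irreducible module over a Novikov
algebra `(N,∘)` over a field `F` of characteristic 0 with `R_M([N,N]⁻) ≠ 0`.  For
`u₁,…,u_n ∈ N`, let `φ, ψ` be the algebra maps from the free associative algebra
`F⟨x₁,…,x_n⟩` to `End_F N`, `End_F M` with `x_i ↦ R_{u_i}` resp. `x_i ↦ R_M(u_i)`.
Then `φ(T) = 0` implies `ψ(T) = 0`. -/
theorem novikov_module_right_operator_relations
    {F : Type*} [Field F] [CharZero F]
    {N : Type*} [AddCommGroup N] [Module F N]
    {M : Type*} [AddCommGroup M] [Module F M]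
    (mul : N →ₗ[F] N →ₗ[F] N)
    (hNov1 : ∀ u v w : N, mul (mul u v) w = mul (mul u w) v)
    (hNov2 : ∀ u v w : N,
      mul (mul u v) w - mul u (mul v w) = mul (mul v u) w - mul v (mul u w))
    (mod : NovikovModule mul M)
    (hMne : ∃ w : M, w ≠ 0)
    (hirr : ∀ V : Submodule F M,
      (∀ (u : N) (x : M), x ∈ V → mod.l u x ∈ V ∧ mod.r x u ∈ V) → V = ⊥ ∨ V = ⊤)
    (hRM : ∃ (a b : N) (w : M), mod.r w (mul a b - mul b a) ≠ 0)
    (n : ℕ) (u : Fin n → N) :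
    ∀ T : FreeAlgebra F (Fin n),
      (FreeAlgebra.lift F (fun i => (mul.flip (u i) : Module.End F N))) T = 0 →
      (FreeAlgebra.lift F (fun i => (mod.r.flip (u i) : Module.End F M))) T = 0 := by
  set φ := (FreeAlgebra.lift F (fun i => (mul.flip (u i) : Module.End F N))) with hφ
  set ψ := (FreeAlgebra.lift F (fun i => (mod.r.flip (u i) : Module.End F M))) with hψ
  -- Key identity 1: ψ S (l a x) = l (φ S a) x
  have key1 : ∀ S : FreeAlgebra F (Fin n), ∀ (a : N) (x : M),
      ψ S (mod.l a x) = mod.l (φ S a) x := by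
    intro S
    induction S using FreeAlgebra.induction with
    | grade0 c =>
      intro a x
      simp [hφ, hψ, Algebra.algebraMap_eq_smul_one]
    | grade1 i =>
      intro a x
      simp only [hφ, hψ, FreeAlgebra.lift_ι_apply, LinearMap.flip_apply]
      exact mod.id1_snd a x (u i)
    | mul S1 S2 ih1 ih2 =>
      intro a x
      simp only [map_mul, Module.End.mul_apply, ih2, ih1]
    | add S1 S2 ih1 ih2 =>
      intro a x
      simp only [map_add, LinearMap.add_apply, ih1, ih2, map_add]
  -- Key identity 2: ψ S (r x v) = r (ψ S x) v
  have key2 : ∀ S : FreeAlgebra F (Fin n), ∀ (x : M) (v : N),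
      ψ S (mod.r x v) = mod.r (ψ S x) v := by
    intro S
    induction S using FreeAlgebra.induction with
    | grade0 c =>
      intro x v
      simp [hψ, Algebra.algebraMap_eq_smul_one]
    | grade1 i =>
      intro x v
      simp only [hψ, FreeAlgebra.lift_ι_apply, LinearMap.flip_apply]
      exact mod.id1_fst x v (u i)
    | mul S1 S2 ih1 ih2 =>
      intro x v
      simp only [map_mul, Module.End.mul_apply, ih2, ih1]
    | add S1 S2 ih1 ih2 =>
      intro x v
      simp only [map_add, LinearMap.add_apply, ih1, ih2, map_add]
  intro T hT
  have hker : ∀ (a : N) (x : M), ψ T (mod.l a x) = 0 := by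
    intro a x
    rw [key1, hT]
    simp
  rcases hirr (LinearMap.ker (ψ T)) (by
      intro v x hx
      refine ⟨LinearMap.mem_ker.mpr (hker v x), LinearMap.mem_ker.mpr ?_⟩
      rw [key2, LinearMap.mem_ker.mp hx]
      simp) with h | h
  · -- kernel is ⊥ : then the left action is zero, contradicting hRM
    exfalso
    have hl0 : ∀ (a : N) (x : M), mod.l a x = 0 := by
      intro a x
      have : mod.l a x ∈ LinearMap.ker (ψ T) := LinearMap.mem_ker.mpr (hker a x)
      rw [h] at this
      simpa using this
    obtain ⟨a, b, w, hw⟩ := hRM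
    apply hw
    have e1 := mod.id2_fst w a b
    have e2 := mod.id2_fst w b a
    have e3 := mod.id1_fst w a b
    rw [hl0, hl0] at e1 e2
    simp only [map_zero, LinearMap.zero_apply, sub_zero, sub_eq_zero] at e1 e2
    rw [map_sub, ← e1, ← e2, e3, sub_self]
  · exact LinearMap.ker_eq_top.mp h
end

section
/- Let (N,∘) be a Novikov algebra over a field F of characteristic 0, let e ∈ N and b ∈ F, and set ∂ = L_e − b·Id. If u ∈ N satisfies u∘e = bu, then ∂(u∘v) = ∂(u)∘v + u∘∂(v) for every v ∈ N. -/
/-- Let `(N,∘)` be a Novikov algebra over a field `F` of characteristic 0,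
`e ∈ N`, `b ∈ F`, and `∂ = L_e − b·Id`.  If `u∘e = b·u`, then
`∂(u∘v) = ∂(u)∘v + u∘∂(v)` for every `v ∈ N`. -/
theorem novikov_partial_leibniz
    {F : Type*} [Field F] [CharZero F]
    {N : Type*} [AddCommGroup N] [Module F N]
    (mul : N →ₗ[F] N →ₗ[F] N)
    (hNov1 : ∀ u v w : N, mul (mul u v) w = mul (mul u w) v)
    (hNov2 : ∀ u v w : N,
      mul (mul u v) w - mul u (mul v w) = mul (mul v u) w - mul v (mul u w))
    (e : N) (b : F) (u : N) (hu : mul u e = b • u) :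
    ∀ v : N,
      mul e (mul u v) - b • mul u v
        = mul (mul e u - b • u) v + mul u (mul e v - b • v) := by
  intro v
  have h := hNov2 e u v
  rw [hu] at h
  simp only [map_sub, map_smul, LinearMap.sub_apply, LinearMap.smul_apply] at h ⊢
  linear_combination (norm := abel) -h
end

section
/- Let (N,∘) be a Novikov algebra over a field F of characteristic 0, let e ∈ N satisfy e∘e = be for some b ∈ F, and set ∂ = L_e − b·Id. Suppose u,v ∈ N and α,β ∈ F, m₁,m₂ ∈ ℕ are such that u∘e = bu, (∂ − α·Id)^{m₁}(u) = 0 and (∂ − β·Id)^{m₂}(v) = 0. Then (∂ − (α+β)·Id)^{m₁+m₂}(u∘v) = 0. -/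
/-- Let `(N,∘)` be a Novikov algebra over a field `F` of characteristic 0,
`e ∈ N` with `e∘e = b·e`, and `∂ = L_e − b·Id`.  If `u∘e = bu`,
`(∂ − α·Id)^{m₁}(u) = 0` and `(∂ − β·Id)^{m₂}(v) = 0`, then
`(∂ − (α+β)·Id)^{m₁+m₂}(u∘v) = 0`. -/
theorem novikov_generalized_weight_multiplicativity
    {F : Type*} [Field F] [CharZero F]
    {N : Type*} [AddCommGroup N] [Module F N]
    (mul : N →ₗ[F] N →ₗ[F] N)
    (hNov1 : ∀ u v w : N, mul (mul u v) w = mul (mul u w) v)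
    (hNov2 : ∀ u v w : N,
      mul (mul u v) w - mul u (mul v w) = mul (mul v u) w - mul v (mul u w))
    (e : N) (b : F) (he : mul e e = b • e)
    (u v : N) (α β : F) (m₁ m₂ : ℕ)
    (hu : mul u e = b • u)
    (hum : ((mul e - b • (1 : Module.End F N) - α • (1 : Module.End F N)) ^ m₁) u = 0)
    (hvm : ((mul e - b • (1 : Module.End F N) - β • (1 : Module.End F N)) ^ m₂) v = 0) :
    ((mul e - b • (1 : Module.End F N) - (α + β) • (1 : Module.End F N)) ^ (m₁ + m₂))
      (mul u v) = 0 := by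
  set A : Module.End F N :=
    mul e - b • (1 : Module.End F N) - α • (1 : Module.End F N) with hA
  set B : Module.End F N :=
    mul e - b • (1 : Module.End F N) - β • (1 : Module.End F N) with hB
  set C : Module.End F N :=
    mul e - b • (1 : Module.End F N) - (α + β) • (1 : Module.End F N) with hC
  have hAx : ∀ x : N, A x = mul e x - b • x - α • x := by
    intro x; simp [hA, LinearMap.sub_apply]
  have hBx : ∀ x : N, B x = mul e x - b • x - β • x := by
    intro x; simp [hB, LinearMap.sub_apply]
  have hCx : ∀ x : N, C x = mul e x - b • x - (α + β) • x := by
    intro x; simp [hC, LinearMap.sub_apply]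
  -- the eigen-condition `x ∘ e = b • x` is preserved by `A`
  have heA : ∀ x : N, mul x e = b • x → mul (A x) e = b • (A x) := by
    intro x hx
    have h1 : mul (mul e x) e = mul (mul e e) x := hNov1 e x e
    rw [he, map_smul, LinearMap.smul_apply] at h1
    rw [hAx x, map_sub, map_sub, map_smul, map_smul, LinearMap.sub_apply,
      LinearMap.sub_apply, LinearMap.smul_apply, LinearMap.smul_apply,
      h1, hx]
    module
  -- the Leibniz rule
  have hLeib : ∀ x y : N, mul x e = b • x →
      C (mul x y) = mul (A x) y + mul x (B y) := by
    intro x y hx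
    have h2 := hNov2 x e y
    rw [hx, map_smul, LinearMap.smul_apply] at h2
    -- h2 : b • mul x y - mul x (mul e y) = mul (mul e x) y - mul e (mul x y)
    have h3 : mul e (mul x y)
        = mul (mul e x) y - b • mul x y + mul x (mul e y) := by
      linear_combination (norm := module) h2
    rw [hCx, h3, hAx x, hBx y, map_sub, map_sub, map_smul, map_smul,
      LinearMap.sub_apply, LinearMap.sub_apply, LinearMap.smul_apply,
      LinearMap.smul_apply, map_sub, map_sub, map_smul, map_smul]
    module
  -- main induction on `m₁ + m₂`
  have key : ∀ n m₁ m₂ : ℕ, m₁ + m₂ = n → ∀ x y : N,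
      mul x e = b • x → (A ^ m₁) x = 0 → (B ^ m₂) y = 0 →
      (C ^ n) (mul x y) = 0 := by
    intro n
    induction n with
    | zero =>
      intro m₁ m₂ hm x y hx hxm hym
      obtain ⟨rfl, rfl⟩ : m₁ = 0 ∧ m₂ = 0 := by omega
      rw [pow_zero, Module.End.one_apply] at hxm
      simp [hxm]
    | succ n ih =>
      intro m₁ m₂ hm x y hx hxm hym
      match m₁, m₂ with
      | 0, _ =>
        rw [pow_zero, Module.End.one_apply] at hxm
        simp [hxm]
      | _ + 1, 0 =>
        rw [pow_zero, Module.End.one_apply] at hym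
        simp [hym]
      | m₁ + 1, m₂ + 1 =>
        rw [pow_succ, Module.End.mul_apply, hLeib x y hx, map_add]
        have h1 : (C ^ n) (mul (A x) y) = 0 := by
          refine ih m₁ (m₂ + 1) (by omega) (A x) y (heA x hx) ?_ hym
          rw [← Module.End.mul_apply, ← pow_succ]; exact hxm
        have h2 : (C ^ n) (mul x (B y)) = 0 := by
          refine ih (m₁ + 1) m₂ (by omega) x (B y) hx hxm ?_
          rw [← Module.End.mul_apply, ← pow_succ]; exact hym
        rw [h1, h2, add_zero]
  exact key (m₁ + m₂) m₁ m₂ rfl u v hu hum hvm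
end

section
/- Let (N,∘) be a Novikov algebra over a field F of characteristic 0, and let e ∈ N and b ∈ F satisfy e∘e = be and (R_e − b·Id)² = 0 on N (i.e. (u∘e)∘e − 2b(u∘e) + b²u = 0 for all u ∈ N). Then for every u ∈ N: e∘(u∘e − bu) = −b(u∘e − bu) and (u∘e − bu)∘e = b(u∘e − bu). -/
/-- Let `(N,∘)` be a Novikov algebra over a field `F` of characteristic 0,
and let `e ∈ N`, `b ∈ F` satisfy `e∘e = b·e` and `(R_e − b·Id)² = 0` on `N`.  Then for
every `u ∈ N`: `e∘(u∘e − bu) = −b(u∘e − bu)` and `(u∘e − bu)∘e = b(u∘e − bu)`. -/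
theorem novikov_e_action_on_Re_defect
    {F : Type*} [Field F] [CharZero F]
    {N : Type*} [AddCommGroup N] [Module F N]
    (mul : N →ₗ[F] N →ₗ[F] N)
    (hNov1 : ∀ u v w : N, mul (mul u v) w = mul (mul u w) v)
    (hNov2 : ∀ u v w : N,
      mul (mul u v) w - mul u (mul v w) = mul (mul v u) w - mul v (mul u w))
    (e : N) (b : F) (he : mul e e = b • e)
    (hRe : ∀ u : N, mul (mul u e) e - (2 * b) • mul u e + (b ^ 2) • u = 0) :
    ∀ u : N,
      mul e (mul u e - b • u) = (-b) • (mul u e - b • u) ∧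
      mul (mul u e - b • u) e = b • (mul u e - b • u) := by
  intro u
  have hA : mul (mul u e) e = (2 * b) • mul u e - (b ^ 2) • u := by
    have := hRe u
    linear_combination (norm := module) this
  have hB : mul (mul e u) e = b • mul e u := by
    have h1 := hNov1 e u e
    rw [he, map_smul, LinearMap.smul_apply] at h1
    exact h1
  have hC := hNov2 u e e
  rw [he, map_smul, hA, hB] at hC
  -- hC : (2*b) • mul u e - b^2 • u - b • mul u e = b • mul e u - mul e (mul u e)
  have hD : mul e (mul u e) = b • mul e u - b • mul u e + (b ^ 2) • u := by
    linear_combination (norm := module) hC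
  constructor
  · rw [map_sub, map_smul, hD]
    module
  · rw [map_sub, map_smul, LinearMap.sub_apply, LinearMap.smul_apply, hA]
    module
end
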